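/- arXiv:2102.11504 — 3 statements merged into one kernel-verified Lean document; each statement's English description precedes it below -/
import Mathlib

section
/- Let Φ be an integral operator Φ(f)(x) = ∫ K(x,y) f(y) dy with continuous kernel K : ℝᵈ × ℝᵈ → Hom(ℝ^{d_X}, ℝ^{d_Y}). If Φ is equivariant with respect to the induced representations of G = ℝᵈ ⋊ H (H ≤ O(d)) determined by representations π_X, π_Y of H, then the kernel satisfies π_Y(R) K(g⁻¹x, y) = K(x, g·y) π_X(R) for all g = (t,R) ∈ G and x, y ∈ ℝᵈ. -/
open MeasureTheory

namespace Stmt5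

variable {d dX dY : ℕ}

/-- If an integral operator with a continuous kernel `K` is equivariant with respect to the
induced representations of `G = ℝᵈ ⋊ H` (with `H ≤ O(d)`) determined by representations
`πX, πY` of `H`, then the kernel satisfies `πY(R) K(g⁻¹x, y) = K(x, g·y) πX(R)` for all
`g = (t,R) ∈ G` and all `x, y ∈ ℝᵈ`. -/
theorem equivariant_integral_operator_kernel_constraint
    (H : Subgroup (Matrix.orthogonalGroup (Fin d) ℝ))
    (πX : H →* ((Fin dX → ℝ) ≃ₗ[ℝ] (Fin dX → ℝ)))
    (πY : H →* ((Fin dY → ℝ) ≃ₗ[ℝ] (Fin dY → ℝ)))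
    (K : (Fin d → ℝ) → (Fin d → ℝ) → ((Fin dX → ℝ) →L[ℝ] (Fin dY → ℝ)))
    (hKcont : Continuous fun p : (Fin d → ℝ) × (Fin d → ℝ) => K p.1 p.2)
    -- equivariance of `Φ(f)(x) = ∫ K(x,y) f(y) dy` : `Φ(ρX(g) f) = ρY(g) Φ(f)`
    (hequiv : ∀ f : (Fin d → ℝ) → (Fin dX → ℝ), Continuous f → HasCompactSupport f →
      ∀ (t : Fin d → ℝ) (R : H) (x : Fin d → ℝ),
        (∫ y, K x y (πX R (f (Matrix.mulVec
            (((R⁻¹ : H) : Matrix.orthogonalGroup (Fin d) ℝ) : Matrix (Fin d) (Fin d) ℝ)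
            (y - t))))) =
          πY R ((∫ y, K (Matrix.mulVec
            (((R⁻¹ : H) : Matrix.orthogonalGroup (Fin d) ℝ) : Matrix (Fin d) (Fin d) ℝ)
            (x - t)) y (f y)))) :
    ∀ (t : Fin d → ℝ) (R : H) (x y : Fin d → ℝ) (v : Fin dX → ℝ),
      πY R (K (Matrix.mulVec
          (((R⁻¹ : H) : Matrix.orthogonalGroup (Fin d) ℝ) : Matrix (Fin d) (Fin d) ℝ)
          (x - t)) y v) =
        K x (Matrix.mulVec (((R : Matrix.orthogonalGroup (Fin d) ℝ)) :
          Matrix (Fin d) (Fin d) ℝ) y + t) (πX R v) := by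
  intro t R x y v
  set A : Matrix (Fin d) (Fin d) ℝ :=
    ((R : Matrix.orthogonalGroup (Fin d) ℝ) : Matrix (Fin d) (Fin d) ℝ) with hA
  set B : Matrix (Fin d) (Fin d) ℝ :=
    (((R⁻¹ : H) : Matrix.orthogonalGroup (Fin d) ℝ) : Matrix (Fin d) (Fin d) ℝ) with hB
  -- basic algebraic facts
  have hBA : B * A = 1 := by
    rw [hA, hB]
    rw [← MulMemClass.coe_mul, ← MulMemClass.coe_mul, inv_mul_cancel]
    simp
  have hAB : A * B = 1 := by
    rw [hA, hB]
    rw [← MulMemClass.coe_mul, ← MulMemClass.coe_mul, mul_inv_cancel]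
    simp
  -- |det A| = 1
  have hmem : (R : Matrix.orthogonalGroup (Fin d) ℝ).1 ∈ Matrix.unitaryGroup (Fin d) ℝ :=
    (R : Matrix.orthogonalGroup (Fin d) ℝ).2
  have hdet2 : A.det * A.det = 1 := by
    have h1 : A * star A = 1 := (Matrix.mem_unitaryGroup_iff.mp hmem)
    have := congrArg Matrix.det h1
    rw [Matrix.det_mul, Matrix.det_one, Matrix.star_eq_conjTranspose,
      Matrix.det_conjTranspose] at this
    simpa using this
  have habs : |A.det| = 1 := by
    have h0 : |A.det| * |A.det| = 1 := by rw [← abs_mul, hdet2, abs_one]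
    rcases mul_self_eq_one_iff.mp h0 with h | h
    · exact h
    · nlinarith [abs_nonneg A.det]
  have hdetne : A.det ≠ 0 := by
    intro h; rw [h] at habs; simp at habs
  -- the affine change of variables z ↦ A z + t is measure preserving
  set φ : (Fin d → ℝ) → (Fin d → ℝ) := fun z => Matrix.mulVec A z + t with hφ
  have hlincont : Continuous (Matrix.toLin' A) := LinearMap.continuous_of_finiteDimensional _
  have hφcont : Continuous φ := by
    have : Continuous fun z => Matrix.toLin' A z + t := by fun_prop
    simpa [Matrix.toLin'_apply] using this
  have hmaplin : Measure.map (Matrix.toLin' A) (volume : Measure (Fin d → ℝ)) = volume := by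
    rw [Measure.map_linearMap_addHaar_eq_smul_addHaar _ (by
      rw [LinearMap.det_toLin']; exact hdetne)]
    rw [LinearMap.det_toLin']
    rw [abs_inv, habs]
    simp
  have hmap : Measure.map φ (volume : Measure (Fin d → ℝ)) = volume := by
    have hcomp : φ = (fun w => w + t) ∘ (Matrix.toLin' A) := by
      funext z; simp [hφ, Matrix.toLin'_apply]
    rw [hcomp, ← Measure.map_map (measurable_add_const t) hlincont.measurable, hmaplin,
      map_add_right_eq_self]
  -- φ as a measurable equiv
  have hBAvec : ∀ z : Fin d → ℝ, Matrix.mulVec B (φ z - t) = z := by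
    intro z
    simp only [hφ, add_sub_cancel_right, Matrix.mulVec_mulVec, hBA, Matrix.one_mulVec]
  let L : (Fin d → ℝ) ≃ₗ[ℝ] (Fin d → ℝ) :=
    LinearEquiv.ofLinear (Matrix.toLin' A) (Matrix.toLin' B)
      (by rw [← Matrix.toLin'_mul, hAB, Matrix.toLin'_one])
      (by rw [← Matrix.toLin'_mul, hBA, Matrix.toLin'_one])
  let φh : (Fin d → ℝ) ≃ₜ (Fin d → ℝ) :=
    L.toContinuousLinearEquiv.toHomeomorph.trans (Homeomorph.addRight t)
  have hφh : ⇑φh = φ := by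
    funext z
    simp only [φh, Homeomorph.trans_apply, Homeomorph.coe_addRight,
      ContinuousLinearEquiv.coe_toHomeomorph]
    show (Matrix.toLin' A) z + t = φ z
    simp [hφ, Matrix.toLin'_apply]
  have hφmp : MeasurePreserving φh (volume : Measure (Fin d → ℝ)) volume := by
    refine ⟨φh.toMeasurableEquiv.measurable, ?_⟩
    rw [hφh]; exact hmap
  have hCoV : ∀ (G : (Fin d → ℝ) → (Fin dY → ℝ)),
      (∫ z, G (φ z)) = ∫ y', G y' := by
    intro G
    have := hφmp.integral_comp φh.toMeasurableEquiv.measurableEmbedding G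
    rw [hφh] at this
    exact this
  set a : Fin d → ℝ := Matrix.mulVec B (x - t) with ha
  -- the continuous function that we will show vanishes
  set F : (Fin d → ℝ) → (Fin dY → ℝ) :=
    fun z => πY R (K a z v) - K x (φ z) (πX R v) with hF
  have hKacont : Continuous fun z => K a z :=
    hKcont.comp (continuous_const.prodMk continuous_id)
  have hKxφcont : Continuous fun z => K x (φ z) :=
    hKcont.comp (continuous_const.prodMk hφcont)
  have hFcont : Continuous F := by
    apply Continuous.sub
    · exact ((πY R).toLinearMap.toContinuousLinearMap).continuous.comp
        (hKacont.clm_apply continuous_const)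
    · exact hKxφcont.clm_apply continuous_const
  -- test against smooth compactly supported functions
  have hint : ∀ (g : (Fin d → ℝ) → ℝ), ContDiff ℝ ((⊤ : ℕ∞) : WithTop ℕ∞) g → HasCompactSupport g →
      ∫ z, g z • F z = 0 := by
    intro g hg hgs
    set f : (Fin d → ℝ) → (Fin dX → ℝ) := fun z => g z • v with hf
    have hfc : Continuous f := (hg.continuous).smul continuous_const
    have hfs : HasCompactSupport f := by
      apply hgs.mono
      intro z hz
      exact fun h0 => hz (by show g z • v = 0; rw [h0, zero_smul])
    have key := hequiv f hfc hfs t R x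
    rw [← hB, ← ha] at key
    -- rewrite the LHS of key via change of variables
    have hLHS : (∫ y', K x y' (πX R (f (Matrix.mulVec B (y' - t)))))
        = ∫ z, g z • K x (φ z) (πX R v) := by
      rw [← hCoV fun y' => K x y' (πX R (f (Matrix.mulVec B (y' - t))))]
      congr 1
      funext z
      rw [hBAvec z]
      simp only [hf, _root_.map_smul, ContinuousLinearMap.map_smul]
    -- rewrite the RHS of key
    have hintg : Integrable fun y' => K a y' (f y') := by
      apply Continuous.integrable_of_hasCompactSupport
      · exact hKacont.clm_apply hfc
      · apply hfs.mono
        intro z hz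
        exact fun h0 => hz (by show K a z (f z) = 0; rw [h0, ContinuousLinearMap.map_zero])
    have hRHS : (πY R) (∫ y', K a y' (f y')) = ∫ z, g z • πY R (K a z v) := by
      have hc := ((πY R).toLinearMap.toContinuousLinearMap).integral_comp_comm hintg
      have he : ∀ w, (πY R).toLinearMap.toContinuousLinearMap w = πY R w := fun _ => rfl
      rw [← he, ← hc]
      congr 1
      funext z
      simp only [hf, ContinuousLinearMap.map_smul, he, _root_.map_smul]
    rw [hLHS, hRHS] at key
    have hint1 : Integrable fun z => g z • K x (φ z) (πX R v) := by
      apply Continuous.integrable_of_hasCompactSupport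
      · exact (hg.continuous).smul (hKxφcont.clm_apply continuous_const)
      · apply hgs.mono
        intro z hz
        exact fun h0 => hz (by show g z • _ = 0; rw [h0, zero_smul])
    have hint2 : Integrable fun z => g z • πY R (K a z v) := by
      apply Continuous.integrable_of_hasCompactSupport
      · exact (hg.continuous).smul
          (((πY R).toLinearMap.toContinuousLinearMap).continuous.comp
            (hKacont.clm_apply continuous_const))
      · apply hgs.mono
        intro z hz
        exact fun h0 => hz (by show g z • _ = 0; rw [h0, zero_smul])
    calc ∫ z, g z • F z
        = ∫ z, (g z • πY R (K a z v) - g z • K x (φ z) (πX R v)) := by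
          congr 1; funext z; rw [hF]; rw [smul_sub]
      _ = (∫ z, g z • πY R (K a z v)) - ∫ z, g z • K x (φ z) (πX R v) :=
          integral_sub hint2 hint1
      _ = 0 := by rw [← key, sub_self]
  have hae : ∀ᵐ z : Fin d → ℝ, F z = 0 :=
    ae_eq_zero_of_integral_contDiff_smul_eq_zero hFcont.locallyIntegrable hint
  have hzero : F = 0 := (hFcont.ae_eq_iff_eq volume continuous_const).mp hae
  have := congrFun hzero y
  simp only [hF, hφ, Pi.zero_apply, sub_eq_zero] at this
  exact this

end Stmt5
end

section
/- Suppose k : ℝᵈ → Hom(ℝ^{d_X}, ℝ^{d_Y}) is continuous and satisfies k(Rx) = π_Y(R) k(x) π_X(R⁻¹) for all x ∈ ℝᵈ and R ∈ H. Then the convolution operator Φ(f)(x) = ∫ k(x - y) f(y) dy is equivariant with respect to the induced representations of G = ℝᵈ ⋊ H: Φ(ρ_X(g)f) = ρ_Y(g)Φ(f) for all g ∈ G. -/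
open MeasureTheory

/-- An orthogonal matrix acting by `mulVec` preserves Lebesgue measure on `Fin d → ℝ`. -/
lemma orth_measurePreserving {d : ℕ} (A : Matrix.orthogonalGroup (Fin d) ℝ) :
    MeasurePreserving (fun y : Fin d → ℝ => Matrix.mulVec (A : Matrix (Fin d) (Fin d) ℝ) y)
      volume volume := by
  set M : Matrix (Fin d) (Fin d) ℝ := (A : Matrix (Fin d) (Fin d) ℝ)
  have h : M * star M = 1 := (Matrix.mem_orthogonalGroup_iff _ _).mp A.2
  have hdet : |M.det| = 1 := by
    have h2 : M.det * M.det = 1 := by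
      have := congrArg Matrix.det h
      simpa [Matrix.det_mul, Matrix.star_eq_conjTranspose, Matrix.det_transpose] using this
    rcases mul_self_eq_one_iff.mp h2 with h | h <;> simp [h]
  have hd0 : M.det ≠ 0 := by
    intro h0; rw [h0] at hdet; simp at hdet
  have hmeas : Measurable (Matrix.toLin' M) := (LinearMap.continuous_on_pi _).measurable
  refine ⟨hmeas, ?_⟩
  have := Real.map_matrix_volume_pi_eq_smul_volume_pi (M := M) hd0
  have habs : |M.det⁻¹| = 1 := by rw [abs_inv, hdet]; norm_num
  rw [show (fun y : Fin d → ℝ => Matrix.mulVec M y) = Matrix.toLin' M from rfl]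
  rw [this]
  rw [abs_inv, hdet]
  simp


/-- If a continuous convolution kernel `k` satisfies `k(Rx) = πY(R) k(x) πX(R⁻¹)` for all
`x ∈ ℝᵈ` and `R ∈ H`, then the convolution operator `Φ(f)(x) = ∫ k(x - y) f(y) dy` is
equivariant with respect to the induced representations of `G = ℝᵈ ⋊ H`:
`Φ(ρX(g) f) = ρY(g) Φ(f)`. -/
theorem constrained_convolution_is_equivariant {d dX dY : ℕ}
    (H : Subgroup (Matrix.orthogonalGroup (Fin d) ℝ))
    (πX : H →* ((Fin dX → ℝ) ≃ₗ[ℝ] (Fin dX → ℝ)))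
    (πY : H →* ((Fin dY → ℝ) ≃ₗ[ℝ] (Fin dY → ℝ)))
    (k : (Fin d → ℝ) → ((Fin dX → ℝ) →L[ℝ] (Fin dY → ℝ)))
    (hkcont : Continuous k)
    (hk : ∀ (x : Fin d → ℝ) (R : H), ∀ v : Fin dX → ℝ,
      k (Matrix.mulVec (((R : Matrix.orthogonalGroup (Fin d) ℝ)) :
          Matrix (Fin d) (Fin d) ℝ) x) v = πY R (k x (πX R⁻¹ v)))
    (f : (Fin d → ℝ) → (Fin dX → ℝ))
    (hf : ∀ x : Fin d → ℝ, Integrable fun y => k (x - y) (f y)) :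
    ∀ (t : Fin d → ℝ) (R : H) (x : Fin d → ℝ),
      (∫ y, k (x - y) (πX R (f (Matrix.mulVec
          (((R⁻¹ : H) : Matrix.orthogonalGroup (Fin d) ℝ) : Matrix (Fin d) (Fin d) ℝ)
          (y - t))))) =
        πY R (∫ y, k (Matrix.mulVec
          (((R⁻¹ : H) : Matrix.orthogonalGroup (Fin d) ℝ) : Matrix (Fin d) (Fin d) ℝ)
          (x - t) - y) (f y)) := by
  intro t R x
  set A : Matrix (Fin d) (Fin d) ℝ :=
    (((R⁻¹ : H) : Matrix.orthogonalGroup (Fin d) ℝ) : Matrix (Fin d) (Fin d) ℝ) with hA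
  set B : Matrix (Fin d) (Fin d) ℝ :=
    ((R : Matrix.orthogonalGroup (Fin d) ℝ) : Matrix (Fin d) (Fin d) ℝ) with hB
  have hBA : B * A = 1 := by
    have : ((R * R⁻¹ : H) : Matrix.orthogonalGroup (Fin d) ℝ) = 1 := by
      rw [mul_inv_cancel]; rfl
    calc B * A = (((R * R⁻¹ : H) : Matrix.orthogonalGroup (Fin d) ℝ) :
        Matrix (Fin d) (Fin d) ℝ) := rfl
      _ = 1 := by rw [this]; rfl
  have hAB : A * B = 1 := by
    have : ((R⁻¹ * R : H) : Matrix.orthogonalGroup (Fin d) ℝ) = 1 := by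
      rw [inv_mul_cancel]; rfl
    calc A * B = (((R⁻¹ * R : H) : Matrix.orthogonalGroup (Fin d) ℝ) :
        Matrix (Fin d) (Fin d) ℝ) := rfl
      _ = 1 := by rw [this]; rfl
  set c : Fin d → ℝ := A.mulVec (x - t) with hc
  -- the substitution map
  set φ : (Fin d → ℝ) → (Fin d → ℝ) := fun y => A.mulVec (y - t) with hφ
  have hφmp : MeasurePreserving φ volume volume := by
    exact (orth_measurePreserving ((R⁻¹ : H) : Matrix.orthogonalGroup (Fin d) ℝ)).comp
      (measurePreserving_sub_right volume t)
  have hφemb : MeasurableEmbedding φ := by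
    have hinj : Function.Injective φ := by
      intro a b hab
      have : B.mulVec (A.mulVec (a - t)) = B.mulVec (A.mulVec (b - t)) :=
        congrArg B.mulVec hab
      rw [Matrix.mulVec_mulVec, Matrix.mulVec_mulVec, hBA, Matrix.one_mulVec,
        Matrix.one_mulVec] at this
      exact sub_left_injective this
    exact hφmp.measurable.measurableEmbedding hinj
  -- pointwise rewrite of the integrand
  have hpt : ∀ y, k (x - y) (πX R (f (φ y))) = πY R (k (c - φ y) (f (φ y))) := by
    intro y
    have hBmul : B.mulVec (c - φ y) = x - y := by
      have : c - φ y = A.mulVec (x - y) := by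
        simp only [hc, hφ, ← Matrix.mulVec_sub]
        congr 1
        abel
      rw [this, Matrix.mulVec_mulVec, hBA, Matrix.one_mulVec]
    have := hk (c - φ y) R (πX R (f (φ y)))
    rw [hBmul] at this
    rw [this]
    congr 1
    have h1 : πX (R⁻¹ * R) = πX R⁻¹ * πX R := πX.map_mul _ _
    have h2 : πX R⁻¹ (πX R (f (φ y))) = πX (R⁻¹ * R) (f (φ y)) := by rw [h1]; rfl
    rw [h2, inv_mul_cancel, πX.map_one]; rfl
  refine (integral_congr_ae (Filter.Eventually.of_forall hpt)).trans ?_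
  -- pull the continuous linear map out of the integral
  set L : (Fin dY → ℝ) →L[ℝ] (Fin dY → ℝ) :=
    LinearMap.toContinuousLinearMap ((πY R : (Fin dY → ℝ) ≃ₗ[ℝ] (Fin dY → ℝ)) :
      (Fin dY → ℝ) →ₗ[ℝ] (Fin dY → ℝ)) with hL
  have hint : Integrable (fun y => k (c - φ y) (f (φ y))) := by
    exact ((hφmp.integrable_comp_emb hφemb).mpr (hf c))
  calc (∫ y, πY R (k (c - φ y) (f (φ y))))
      = ∫ y, L (k (c - φ y) (f (φ y))) := rfl
    _ = L (∫ y, k (c - φ y) (f (φ y))) := L.integral_comp_comm hint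
    _ = πY R (∫ y, k (c - y) (f y)) := by
        rw [hφmp.integral_comp hφemb (fun z => k (c - z) (f z))]; rfl
end

section
/- As a corollary: if J is a proper convex lower semicontinuous functional on a Hilbert space X invariant under a unitary representation ρ of a group G, then the proximal operator of its Fenchel conjugate, prox_{J*}, is equivariant: prox_{J*}(ρ(g)v) = ρ(g) prox_{J*}(v) for all g ∈ G and v ∈ X. -/
open scoped RealInnerProductSpace

namespace Stmt15

/-- Convexity of an `EReal`-valued functional. -/
def ConvexOnE {X : Type*} [NormedAddCommGroup X] [NormedSpace ℝ X] (f : X → EReal) : Prop :=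
  ∀ (u v : X) (a b : ℝ), 0 ≤ a → 0 ≤ b → a + b = 1 →
    f (a • u + b • v) ≤ (a : EReal) * f u + (b : EReal) * f v

/-- The Fenchel conjugate `J*(v) = sup_u ⟨u, v⟩ - J(u)` of `J : X → ℝ ∪ {+∞}`. -/
noncomputable def fenchel {X : Type*} [NormedAddCommGroup X] [InnerProductSpace ℝ X]
    (J : X → EReal) (v : X) : EReal :=
  ⨆ u : X, ((⟪u, v⟫ : ℝ) : EReal) - J u

/-- If `J` is a proper convex lower semicontinuous functional on a Hilbert space,
invariant under a unitary representation `ρ` of `G`, then the proximal operator of its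
Fenchel conjugate `J*` is equivariant: `prox_{J*}(ρ(g)v) = ρ(g) prox_{J*}(v)`. -/
theorem prox_fenchel_conjugate_equivariant {X : Type*} [NormedAddCommGroup X]
    [InnerProductSpace ℝ X] [CompleteSpace X] {G : Type*} [Group G]
    (ρ : G →* (X ≃ₗᵢ[ℝ] X)) (J : X → EReal)
    (hne_bot : ∀ u, J u ≠ ⊥) (hproper : ∃ u, J u ≠ ⊤)
    (hconv : ConvexOnE J) (hlsc : LowerSemicontinuous J)
    (hJ : ∀ (g : G) (u : X), J (ρ g u) = J u)
    (prox : X → X)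
    (hmin : ∀ v w : X,
      (((1 / 2 : ℝ) * ‖v - prox v‖ ^ 2 : ℝ) : EReal) + fenchel J (prox v) ≤
        (((1 / 2 : ℝ) * ‖v - w‖ ^ 2 : ℝ) : EReal) + fenchel J w)
    (huniq : ∀ v w : X,
      (∀ z : X, (((1 / 2 : ℝ) * ‖v - w‖ ^ 2 : ℝ) : EReal) + fenchel J w ≤
        (((1 / 2 : ℝ) * ‖v - z‖ ^ 2 : ℝ) : EReal) + fenchel J z) → w = prox v) :
    ∀ (g : G) (v : X), prox (ρ g v) = ρ g (prox v) := by
  have hfen : ∀ (g : G) (w : X), fenchel J (ρ g w) = fenchel J w := by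
    intro g w
    unfold fenchel
    rw [← (ρ g).toLinearEquiv.toEquiv.iSup_comp
      (g := fun u : X => ((⟪u, ρ g w⟫ : ℝ) : EReal) - J u)]
    refine iSup_congr fun u => ?_
    have h1 : (⟪(ρ g) u, (ρ g) w⟫ : ℝ) = ⟪u, w⟫ := (ρ g).inner_map_map u w
    show ((⟪(ρ g) u, (ρ g) w⟫ : ℝ) : EReal) - J ((ρ g) u) = _
    rw [h1, hJ]
  intro g v
  symm
  apply huniq
  intro z
  have h2 : ‖ρ g v - ρ g (prox v)‖ = ‖v - prox v‖ := by
    rw [← map_sub]; exact (ρ g).norm_map _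
  have h3 : ‖ρ g v - z‖ = ‖v - (ρ g).symm z‖ := by
    rw [← ((ρ g)).norm_map (v - (ρ g).symm z), map_sub,
      LinearIsometryEquiv.apply_symm_apply]
  have h4 : fenchel J z = fenchel J ((ρ g).symm z) := by
    conv_lhs => rw [← (ρ g).apply_symm_apply z]
    exact hfen g _
  rw [h2, h3, h4, hfen g (prox v)]
  exact hmin v ((ρ g).symm z)

end Stmt15
end
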